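/- arXiv:1607.03714 — 2 statements merged into one kernel-verified Lean document; each statement's English description precedes it below -/
import Mathlib

section
/- There exists a universal constant C > 0 such that for every α₁ > 0, every sufficiently large even integer n, and every positive integer k ≤ α₁√n with k ≤ n/2 − 1, 2^{k/2} · C_{n/2,k} / C_{n,k} ≥ C e^{−α₁²/4}, where C_{m,k} = (m−k)·Vol(B_{m−k}) / (m·Vol(B_m)). Equivalently, 2^{k/2} · Γ(n/4+1/2)Γ(n/2−k/2+1/2) / ( Γ(n/4−k/2+1/2)Γ(n/2+1/2) ) ≥ C e^{−α₁²/4}. -/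
open MeasureTheory Matrix

set_option synthInstance.maxHeartbeats 1000000
set_option maxHeartbeats 1000000

noncomputable section

namespace Paper

/-- The constant `C_{m,k} = (m−k)·Vol(B_{m−k}) / (m·Vol(B_m))` from the change-of-variables
formula on the sphere. -/
def Cmk (m k : ℕ) : ℝ :=
  ((m - k : ℕ) : ℝ) * (volume (Metric.closedBall (0 : EuclideanSpace ℝ (Fin (m - k))) 1)).toReal /
    ((m : ℝ) * (volume (Metric.closedBall (0 : EuclideanSpace ℝ (Fin m)) 1)).toReal)

open Real

private lemma sqle {a b : ℝ} (ha : 0 ≤ a) (hb : 0 ≤ b) (h : a^2 ≤ b^2) : a ≤ b := by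
  have := Real.sqrt_le_sqrt h
  rwa [Real.sqrt_sq ha, Real.sqrt_sq hb] at this

private lemma gsq (x : ℝ) (hx : 0 < x) : Gamma (x + 1/2) ^ 2 ≤ x * Gamma x ^ 2 := by
  have h := convexOn_log_Gamma.2 (Set.mem_Ioi.mpr hx)
    (Set.mem_Ioi.mpr (by linarith : (0:ℝ) < x + 1))
    (by norm_num : (0:ℝ) ≤ (1/2:ℝ)) (by norm_num : (0:ℝ) ≤ (1/2:ℝ)) (by norm_num)
  simp only [Function.comp, smul_eq_mul] at h
  have hx1 : (1/2 : ℝ) * x + (1/2 : ℝ) * (x+1) = x + 1/2 := by ring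
  rw [hx1] at h
  have hg : Gamma (x+1) = x * Gamma x := Gamma_add_one hx.ne'
  have hgp : 0 < Gamma x := Gamma_pos_of_pos hx
  have hgp2 : 0 < Gamma (x + 1/2) := Gamma_pos_of_pos (by linarith)
  have h2 : 2 * log (Gamma (x+1/2)) ≤ log (Gamma x) + log (Gamma (x+1)) := by linarith
  have := Real.exp_le_exp.mpr h2
  rw [Real.exp_add, Real.exp_log hgp, Real.exp_log (by rw [hg]; positivity)] at this
  rw [show (2:ℝ) * log (Gamma (x+1/2)) = log (Gamma (x+1/2)^2) by
    rw [Real.log_pow]; push_cast; ring] at this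
  rw [Real.exp_log (by positivity)] at this
  rw [hg] at this; nlinarith [sq_nonneg (Gamma x)]

private lemma wendel_upper (x : ℝ) (hx : 0 < x) : Gamma (x + 1/2) ≤ Real.sqrt x * Gamma x := by
  have h := gsq x hx
  refine sqle (Gamma_pos_of_pos (by linarith)).le (by positivity) ?_
  rw [mul_pow, Real.sq_sqrt hx.le]; exact h

private lemma wendel_lower (x : ℝ) (hx : 0 < x) :
    x * Gamma x ≤ Real.sqrt (x + 1/2) * Gamma (x + 1/2) := by
  have h := gsq (x + 1/2) (by linarith)
  have hg : Gamma (x + 1/2 + 1/2) = x * Gamma x := by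
    rw [show x + 1/2 + 1/2 = x + 1 by ring, Gamma_add_one hx.ne']
  rw [hg] at h
  refine sqle (mul_nonneg hx.le (Gamma_pos_of_pos hx).le) (by positivity) ?_
  rw [mul_pow, mul_pow, Real.sq_sqrt (by linarith : (0:ℝ) ≤ x + 1/2)]; nlinarith [h]

/-- `e_i` error term. -/
def eterm (q x : ℝ) : ℝ := ((q-x+1)*(q-x/2) - (q-x)^2)/(2*(q-x)^2)

/-- sum of error terms. -/
def Ssum (q : ℝ) (k : ℕ) : ℝ := ∑ i ∈ Finset.range k, eterm q ((i:ℝ)+1)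

private lemma eterm_nonneg (q x : ℝ) (hx : 0 ≤ x) (hq : x < q) : 0 ≤ eterm q x := by
  unfold eterm
  have h1 : (0:ℝ) < q - x := by linarith
  apply div_nonneg _ (by positivity)
  nlinarith

private lemma key_step (q : ℝ) (k : ℕ) (hk1 : ((k:ℝ)+1) ≤ q/2) (hq : 4 ≤ q) :
    Real.exp (-(eterm q ((k:ℝ)+1))) * Real.sqrt ((q-k)/2) * Real.sqrt (q - ((k:ℝ)+1)/2)
      ≤ Real.sqrt 2 * ((q-k)/2 - 1/2) := by
  set e := eterm q ((k:ℝ)+1) with he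
  have hu : (0:ℝ) < q - ((k:ℝ)+1) := by linarith
  have hA : (0:ℝ) < (q-k)/2 := by linarith
  have hB : (0:ℝ) < q - ((k:ℝ)+1)/2 := by linarith
  have hk0 : (0:ℝ) ≤ (k:ℝ) := Nat.cast_nonneg k
  have henn : 0 ≤ e := eterm_nonneg q ((k:ℝ)+1) (by linarith) (by linarith)
  have hid : (1 + 2*e) * (q - ((k:ℝ)+1))^2 = 2 * ((q-k)/2) * (q - ((k:ℝ)+1)/2) := by
    rw [he]; unfold eterm; field_simp; ring
  have hexp : (1 + 2*e) * Real.exp (-(e))^2 ≤ 1 := by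
    have h1 : 1 + 2*e ≤ Real.exp (2*e) := by
      have := Real.add_one_le_exp (2*e); linarith
    have h2 : Real.exp (-(e))^2 = Real.exp (-(2*e)) := by
      rw [← Real.exp_nat_mul]; ring_nf
    rw [h2]
    calc (1 + 2*e) * Real.exp (-(2*e)) ≤ Real.exp (2*e) * Real.exp (-(2*e)) := by
          apply mul_le_mul_of_nonneg_right h1 (Real.exp_nonneg _)
      _ = 1 := by rw [← Real.exp_add]; simp
  refine sqle (by positivity) (mul_nonneg (Real.sqrt_nonneg 2) (by linarith)) ?_
  have hsq : (Real.exp (-(e)) * Real.sqrt ((q-k)/2) * Real.sqrt (q - ((k:ℝ)+1)/2))^2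
      = Real.exp (-(e))^2 * ((q-k)/2) * (q - ((k:ℝ)+1)/2) := by
    rw [mul_pow, mul_pow, Real.sq_sqrt hA.le, Real.sq_sqrt hB.le]
  have hsq2 : (Real.sqrt 2 * ((q-k)/2 - 1/2))^2 = 2 * ((q-k)/2 - 1/2)^2 := by
    rw [mul_pow, Real.sq_sqrt (by norm_num : (0:ℝ) ≤ 2)]
  rw [hsq, hsq2]
  have h3 : ((q-k)/2 - 1/2) = (q - ((k:ℝ)+1))/2 := by ring
  rw [h3]
  nlinarith [mul_le_mul_of_nonneg_right hexp (by nlinarith : (0:ℝ) ≤ (q - ((k:ℝ)+1))^2 / 2),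
    Real.exp_nonneg (-(e)), sq_nonneg (Real.exp (-(e)))]

private lemma key (q : ℝ) (hq : 4 ≤ q) : ∀ k : ℕ, (k:ℝ) ≤ q/2 →
    Real.exp (-(Ssum q k)) * (Gamma ((q-k)/2) * Gamma q)
      ≤ (2:ℝ)^((k:ℝ)/2) * Gamma (q/2) * Gamma (q - (k:ℝ)/2) := by
  intro k
  induction k with
  | zero => simp [Ssum]
  | succ k ih =>
    intro hk1
    push_cast at hk1 ⊢
    have hk : (k:ℝ) ≤ q/2 := by linarith
    have IH := ih (by linarith)
    set A := (q-k)/2 with hA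
    have hApos : (0:ℝ) < A := by rw [hA]; linarith
    have hA1 : (1:ℝ) ≤ A - 1/2 := by rw [hA]; linarith
    have hBpos : (0:ℝ) < q - ((k:ℝ)+1)/2 := by linarith
    have hGq : 0 < Gamma q := Gamma_pos_of_pos (by linarith)
    have hGq2 : 0 < Gamma (q/2) := Gamma_pos_of_pos (by linarith)
    have hGA : 0 < Gamma A := Gamma_pos_of_pos hApos
    have hGA' : 0 < Gamma (A - 1/2) := Gamma_pos_of_pos (by linarith)
    have hGB : 0 < Gamma (q - ((k:ℝ)+1)/2) := Gamma_pos_of_pos hBpos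
    have hGB' : 0 < Gamma (q - (k:ℝ)/2) := Gamma_pos_of_pos (by linarith)
    have h1 : (A - 1/2) * Gamma (A - 1/2) ≤ Real.sqrt A * Gamma A := by
      have := wendel_lower (A - 1/2) (by linarith)
      simpa [show A - 1/2 + 1/2 = A by ring] using this
    have h2 : Gamma (q - (k:ℝ)/2) ≤
        Real.sqrt (q - ((k:ℝ)+1)/2) * Gamma (q - ((k:ℝ)+1)/2) := by
      have h := wendel_upper (q - ((k:ℝ)+1)/2) hBpos
      rwa [show q - ((k:ℝ)+1)/2 + 1/2 = q - (k:ℝ)/2 by ring] at h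
    have h3 := key_step q k (by linarith) hq
    rw [← hA] at h3
    have hS : Ssum q (k+1) = Ssum q k + eterm q ((k:ℝ)+1) := by
      rw [Ssum, Finset.sum_range_succ]; rfl
    have hE : Real.exp (-(Ssum q (k+1)))
        = Real.exp (-(Ssum q k)) * Real.exp (-(eterm q ((k:ℝ)+1))) := by
      rw [hS, ← Real.exp_add]; ring_nf
    set Sk := Real.exp (-(Ssum q k)) with hSk
    set E := Real.exp (-(eterm q ((k:ℝ)+1))) with hEd
    have hSkpos : 0 < Sk := Real.exp_pos _
    have hEpos : 0 < E := Real.exp_pos _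
    have hgoalargs : (q - ((k:ℝ)+1))/2 = A - 1/2 := by rw [hA]; ring
    have hmain : (Sk * E * (Gamma (A - 1/2) * Gamma q)) * (A - 1/2)
        ≤ ((2:ℝ)^(((k:ℝ)+1)/2) * Gamma (q/2) * Gamma (q - ((k:ℝ)+1)/2)) * (A - 1/2) := by
      have c1 : (Sk * E * (Gamma (A - 1/2) * Gamma q)) * (A - 1/2)
          = (Sk * E * Gamma q) * ((A - 1/2) * Gamma (A - 1/2)) := by ring
      have c2 : (Sk * E * Gamma q) * ((A - 1/2) * Gamma (A - 1/2))
          ≤ (Sk * E * Gamma q) * (Real.sqrt A * Gamma A) :=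
        mul_le_mul_of_nonneg_left h1 (by positivity)
      have c3 : (Sk * E * Gamma q) * (Real.sqrt A * Gamma A)
          = (E * Real.sqrt A) * (Sk * (Gamma A * Gamma q)) := by ring
      have c4 : (E * Real.sqrt A) * (Sk * (Gamma A * Gamma q))
          ≤ (E * Real.sqrt A) * ((2:ℝ)^((k:ℝ)/2) * Gamma (q/2) * Gamma (q - (k:ℝ)/2)) :=
        mul_le_mul_of_nonneg_left IH (by positivity)
      have c5 : (E * Real.sqrt A) * ((2:ℝ)^((k:ℝ)/2) * Gamma (q/2) * Gamma (q - (k:ℝ)/2))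
          ≤ (E * Real.sqrt A) * ((2:ℝ)^((k:ℝ)/2) * Gamma (q/2) *
            (Real.sqrt (q - ((k:ℝ)+1)/2) * Gamma (q - ((k:ℝ)+1)/2))) := by
        apply mul_le_mul_of_nonneg_left _ (by positivity)
        apply mul_le_mul_of_nonneg_left h2 (by positivity)
      have c6 : (E * Real.sqrt A) * ((2:ℝ)^((k:ℝ)/2) * Gamma (q/2) *
            (Real.sqrt (q - ((k:ℝ)+1)/2) * Gamma (q - ((k:ℝ)+1)/2)))
          = (E * Real.sqrt A * Real.sqrt (q - ((k:ℝ)+1)/2)) *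
            ((2:ℝ)^((k:ℝ)/2) * Gamma (q/2) * Gamma (q - ((k:ℝ)+1)/2)) := by ring
      have c7 : (E * Real.sqrt A * Real.sqrt (q - ((k:ℝ)+1)/2)) *
            ((2:ℝ)^((k:ℝ)/2) * Gamma (q/2) * Gamma (q - ((k:ℝ)+1)/2))
          ≤ (Real.sqrt 2 * (A - 1/2)) *
            ((2:ℝ)^((k:ℝ)/2) * Gamma (q/2) * Gamma (q - ((k:ℝ)+1)/2)) :=
        mul_le_mul_of_nonneg_right h3 (by positivity)
      have c8 : (Real.sqrt 2 * (A - 1/2)) *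
            ((2:ℝ)^((k:ℝ)/2) * Gamma (q/2) * Gamma (q - ((k:ℝ)+1)/2))
          = ((2:ℝ)^(((k:ℝ)+1)/2) * Gamma (q/2) * Gamma (q - ((k:ℝ)+1)/2)) * (A - 1/2) := by
        rw [show ((k:ℝ)+1)/2 = (k:ℝ)/2 + 1/2 by ring, Real.rpow_add (by norm_num : (0:ℝ) < 2),
          show ((2:ℝ)^((1:ℝ)/2) = Real.sqrt 2) by rw [Real.sqrt_eq_rpow]]
        ring
      calc _ = _ := c1
        _ ≤ _ := c2
        _ = _ := c3
        _ ≤ _ := c4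
        _ ≤ _ := c5
        _ = _ := c6
        _ ≤ _ := c7
        _ = _ := c8
    rw [hE, hgoalargs]
    exact le_of_mul_le_mul_right hmain (by linarith)

private lemma sum_shift (k : ℕ) (c : ℝ) :
    ∑ i ∈ Finset.range k, ((i:ℝ)+c) = ((k:ℝ)^2 - k)/2 + k*c := by
  induction k with
  | zero => simp
  | succ m ih => rw [Finset.sum_range_succ, ih]; push_cast; ring

private lemma sumbound (q α₁ : ℝ) (k : ℕ) (hα : 0 < α₁) (hq : 8*α₁^2 + α₁^6 + 4 ≤ q)
    (hk2 : (k:ℝ)^2 ≤ 2*α₁^2*q) (hk3 : α₁^2*(k:ℝ) ≤ 2*q) (hkq : (k:ℝ) ≤ q/2) :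
    Ssum q k ≤ α₁^2/4 + 3 := by
  have hq4 : (4:ℝ) ≤ q := by
    have h0 : (0:ℝ) ≤ 8*α₁^2 + α₁^6 := by positivity
    linarith
  obtain ⟨D, hD⟩ : ∃ D : ℝ, D = q - (k:ℝ) := ⟨_, rfl⟩
  have hDpos : (0:ℝ) < D := by rw [hD]; linarith
  have hD2 : (2:ℝ) ≤ D := by rw [hD]; linarith
  have hkD : (k:ℝ) ≤ D := by rw [hD]; linarith
  have hterm : ∀ i ∈ Finset.range k,
      eterm q ((i:ℝ)+1) ≤ ((i:ℝ)+3)/(4*D) + ((i:ℝ)+1)/(4*D^2) := by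
    intro i hi
    have hik : (i:ℝ)+1 ≤ (k:ℝ) := by
      have := Finset.mem_range.mp hi
      exact_mod_cast Nat.succ_le_of_lt this
    set j : ℝ := (i:ℝ)+1 with hj
    have hi0 : (0:ℝ) ≤ (i:ℝ) := Nat.cast_nonneg i
    have hj1 : (1:ℝ) ≤ j := by rw [hj]; linarith
    have hqj : D ≤ q - j := by rw [hD]; linarith
    have hqjpos : (0:ℝ) < q - j := lt_of_lt_of_le hDpos hqj
    have heq : eterm q j = (1+j/2)/(2*(q-j)) + j/(4*(q-j)^2) := by
      unfold eterm; field_simp; ring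
    rw [heq]
    have b1 : (1+j/2)/(2*(q-j)) ≤ (1+j/2)/(2*D) := by
      apply div_le_div_of_nonneg_left (by linarith) (by linarith) (by linarith)
    have b2 : j/(4*(q-j)^2) ≤ j/(4*D^2) := by
      apply div_le_div_of_nonneg_left (by linarith) (by positivity) (by nlinarith)
    have e1 : (1+j/2)/(2*D) = ((i:ℝ)+3)/(4*D) := by
      rw [hj]; field_simp; ring
    linarith [b1, b2]
  have hsum := Finset.sum_le_sum hterm
  rw [Ssum]
  refine le_trans hsum ?_
  have hsplit : ∑ i ∈ Finset.range k, (((i:ℝ)+3)/(4*D) + ((i:ℝ)+1)/(4*D^2))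
      = (((k:ℝ)^2 - k)/2 + k*3)/(4*D) + (((k:ℝ)^2 - k)/2 + k*1)/(4*D^2) := by
    rw [Finset.sum_add_distrib, ← Finset.sum_div, ← Finset.sum_div, sum_shift, sum_shift]
  rw [hsplit]
  rw [div_add_div _ _ (by positivity) (by positivity), div_le_iff₀ (by positivity)]
  have hq' : q = D + (k:ℝ) := by rw [hD]; ring
  rw [hq'] at hk2 hk3
  have hk0 : (0:ℝ) ≤ (k:ℝ) := Nat.cast_nonneg k
  have h4 : (k:ℝ)*(k:ℝ) ≤ D*D := mul_le_mul hkD hkD hk0 hDpos.le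
  have F1 : (k:ℝ)^2*D^2 ≤ 2*α₁^2*D^3 + 2*α₁^2*(k:ℝ)*D^2 := by
    nlinarith [mul_le_mul_of_nonneg_right hk2 (sq_nonneg D)]
  have F2 : α₁^2*(k:ℝ)*D^2 ≤ 2*D^3 + 2*(k:ℝ)*D^2 := by
    nlinarith [mul_le_mul_of_nonneg_right hk3 (sq_nonneg D)]
  have F3 : (k:ℝ)*D^2 ≤ D^3 := by
    nlinarith [mul_le_mul_of_nonneg_right hkD (sq_nonneg D)]
  have F4 : (k:ℝ)^2*D ≤ D^3 := by
    nlinarith [mul_le_mul_of_nonneg_right h4 hDpos.le]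
  have F5 : 2*D^2 ≤ D^3 := by
    nlinarith [mul_le_mul_of_nonneg_right hD2 (sq_nonneg D)]
  have F6 : (k:ℝ)*D ≤ D^2 := by
    nlinarith [mul_le_mul_of_nonneg_right hkD hDpos.le]
  linarith [F1, F2, F3, F4, F5, F6, pow_nonneg hDpos.le 3]

private lemma ball_vol (d : ℕ) (hd : 0 < d) :
    (volume (Metric.closedBall (0 : EuclideanSpace ℝ (Fin d)) 1)).toReal
      = Real.sqrt π ^ d / Gamma ((d:ℝ)/2 + 1) := by
  have : Nonempty (Fin d) := ⟨⟨0, hd⟩⟩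
  rw [EuclideanSpace.volume_closedBall]
  have hG : 0 < Gamma ((Fintype.card (Fin d) : ℝ)/2 + 1) :=
    Gamma_pos_of_pos (by positivity)
  rw [ENNReal.toReal_mul, ENNReal.toReal_pow, ENNReal.toReal_ofReal (by norm_num),
    ENNReal.toReal_ofReal (by positivity)]
  simp [Fintype.card_fin]

private lemma Cmk_eq (m k : ℕ) (hkm : k < m) :
    Cmk m k = Gamma ((m:ℝ)/2) / (Gamma (((m:ℝ)-(k:ℝ))/2) * Real.sqrt π ^ k) := by
  have hm : 0 < m := lt_of_le_of_lt (Nat.zero_le k) hkm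
  have hd : 0 < m - k := Nat.sub_pos_of_lt hkm
  unfold Cmk
  rw [ball_vol _ hd, ball_vol _ hm]
  have hcast : ((m - k : ℕ) : ℝ) = (m:ℝ) - (k:ℝ) := by
    rw [Nat.cast_sub hkm.le]
  rw [hcast]
  have hmk2 : (0:ℝ) < ((m:ℝ) - (k:ℝ))/2 := by
    have : (k:ℝ) < (m:ℝ) := by exact_mod_cast hkm
    linarith
  have hm2 : (0:ℝ) < (m:ℝ)/2 := by positivity
  have g1 : Gamma (((m:ℝ)-(k:ℝ))/2 + 1) = (((m:ℝ)-(k:ℝ))/2) * Gamma (((m:ℝ)-(k:ℝ))/2) :=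
    Gamma_add_one hmk2.ne'
  have g2 : Gamma ((m:ℝ)/2 + 1) = ((m:ℝ)/2) * Gamma ((m:ℝ)/2) := Gamma_add_one hm2.ne'
  rw [g1, g2]
  have hpow : Real.sqrt π ^ m = Real.sqrt π ^ (m - k) * Real.sqrt π ^ k := by
    rw [← pow_add, Nat.sub_add_cancel hkm.le]
  rw [hpow]
  have hG1 : Gamma (((m:ℝ)-(k:ℝ))/2) ≠ 0 := (Gamma_pos_of_pos hmk2).ne'
  have hG2 : Gamma ((m:ℝ)/2) ≠ 0 := (Gamma_pos_of_pos hm2).ne'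
  have hsπ : Real.sqrt π ≠ 0 := by positivity
  have hm0 : (m:ℝ) ≠ 0 := by positivity
  have hmk0 : (m:ℝ) - (k:ℝ) ≠ 0 := by intro h; apply hmk2.ne'; rw [h]; ring
  field_simp

/-- Proposition 3.8. -/
theorem ratio_of_coefficients_lower_bound :
    ∃ C : ℝ, 0 < C ∧ ∀ α₁ : ℝ, 0 < α₁ → ∃ N : ℕ, ∀ n : ℕ, Even n → N ≤ n →
      ∀ k : ℕ, 0 < k → (k : ℝ) ≤ α₁ * Real.sqrt n → k ≤ n / 2 - 1 →
      C * Real.exp (-α₁ ^ 2 / 4) ≤ (2 : ℝ) ^ ((k : ℝ) / 2) * Cmk (n / 2) k / Cmk n k := by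
  refine ⟨Real.exp (-3), Real.exp_pos _, ?_⟩
  intro α₁ hα
  refine ⟨⌈2*(8*α₁^2 + α₁^6 + 4)⌉₊, ?_⟩
  intro n hev hN k hk0 hk1 _
  obtain ⟨Q, hQdef⟩ : ∃ Q : ℝ, Q = ((n/2 : ℕ) : ℝ) := ⟨_, rfl⟩
  have hn2 : (n/2) * 2 = n := Nat.div_two_mul_two_of_even hev
  have hQn : (n:ℝ) = 2*Q := by
    rw [hQdef]
    conv_lhs => rw [← hn2]
    push_cast; ring
  have hNle : 2*(8*α₁^2 + α₁^6 + 4) ≤ (n:ℝ) := by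
    calc 2*(8*α₁^2 + α₁^6 + 4) ≤ (⌈2*(8*α₁^2 + α₁^6 + 4)⌉₊ : ℝ) := Nat.le_ceil _
      _ ≤ (n:ℝ) := by exact_mod_cast hN
  have hq : 8*α₁^2 + α₁^6 + 4 ≤ Q := by rw [hQn] at hNle; linarith
  have hq4 : (4:ℝ) ≤ Q := by
    have h0 : (0:ℝ) ≤ 8*α₁^2 + α₁^6 := by positivity
    linarith
  have hk0' : (0:ℝ) ≤ (k:ℝ) := Nat.cast_nonneg k
  have hn0 : (0:ℝ) ≤ (n:ℝ) := Nat.cast_nonneg n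
  have hsq : Real.sqrt (n:ℝ) * Real.sqrt (n:ℝ) = (n:ℝ) := Real.mul_self_sqrt hn0
  have hk2 : (k:ℝ)^2 ≤ 2*α₁^2*Q := by
    have h := mul_le_mul hk1 hk1 hk0' (by positivity)
    have h2 : (k:ℝ)^2 ≤ α₁^2 * (n:ℝ) := by nlinarith [hsq]
    rw [hQn] at h2; linarith
  have hcube : α₁^3 ≤ Real.sqrt (n:ℝ) := by
    refine sqle (by positivity) (Real.sqrt_nonneg _) ?_
    rw [Real.sq_sqrt hn0]
    have h6 : α₁^6 ≤ Q := by nlinarith [sq_nonneg α₁]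
    have hQle : Q ≤ (n:ℝ) := by rw [hQn]; linarith
    calc (α₁^3)^2 = α₁^6 := by ring
      _ ≤ Q := h6
      _ ≤ (n:ℝ) := hQle
  have hk3 : α₁^2*(k:ℝ) ≤ 2*Q := by
    have h1 : α₁^2*(k:ℝ) ≤ α₁^2*(α₁ * Real.sqrt n) :=
      mul_le_mul_of_nonneg_left hk1 (sq_nonneg α₁)
    have h3 : α₁^3 * Real.sqrt n ≤ Real.sqrt n * Real.sqrt n :=
      mul_le_mul_of_nonneg_right hcube (Real.sqrt_nonneg _)
    rw [hsq] at h3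
    have h4 : α₁^2*(k:ℝ) ≤ (n:ℝ) := by nlinarith
    rw [hQn] at h4; linarith
  have hkq : (k:ℝ) ≤ Q/2 := by
    refine sqle hk0' (by linarith) ?_
    have hα2 : α₁^2 ≤ Q/8 := by nlinarith [pow_nonneg hα.le 6]
    nlinarith [hk2, hq4]
  have hkltq : k < n/2 := by
    have h : (k:ℝ) < ((n/2:ℕ):ℝ) := by rw [← hQdef]; linarith
    exact_mod_cast h
  have hkltn : k < n := lt_of_lt_of_le hkltq (Nat.div_le_self n 2)
  have hGq : 0 < Gamma Q := Gamma_pos_of_pos (by linarith)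
  have hGq2 : 0 < Gamma (Q/2) := Gamma_pos_of_pos (by linarith)
  have hGA : 0 < Gamma ((Q-(k:ℝ))/2) := Gamma_pos_of_pos (by linarith)
  have hGB : 0 < Gamma (Q-(k:ℝ)/2) := Gamma_pos_of_pos (by linarith)
  have hsπ : (0:ℝ) < Real.sqrt π ^ k := by positivity
  have eA : Cmk (n/2) k = Gamma (Q/2) / (Gamma ((Q-(k:ℝ))/2) * Real.sqrt π ^ k) := by
    rw [Cmk_eq (n/2) k hkltq, ← hQdef]
  have eB : Cmk n k = Gamma Q / (Gamma (Q-(k:ℝ)/2) * Real.sqrt π ^ k) := by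
    rw [Cmk_eq n k hkltn, hQn]
    rw [show (2*Q)/2 = Q by ring, show (2*Q - (k:ℝ))/2 = Q - (k:ℝ)/2 by ring]
  have hratio : (2:ℝ)^((k:ℝ)/2) * Cmk (n/2) k / Cmk n k
      = ((2:ℝ)^((k:ℝ)/2) * Gamma (Q/2) * Gamma (Q-(k:ℝ)/2))
        / (Gamma ((Q-(k:ℝ))/2) * Gamma Q) := by
    rw [eA, eB]
    field_simp
  rw [hratio]
  have hkey := key Q hq4 k hkq
  have hsb := sumbound Q α₁ k hα hq hk2 hk3 hkq
  have hle : Real.exp (-3) * Real.exp (-α₁^2/4) ≤ Real.exp (-(Ssum Q k)) := by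
    rw [← Real.exp_add]
    exact Real.exp_le_exp.mpr (by linarith)
  rw [le_div_iff₀ (by positivity)]
  calc Real.exp (-3) * Real.exp (-α₁^2/4) * (Gamma ((Q-(k:ℝ))/2) * Gamma Q)
      ≤ Real.exp (-(Ssum Q k)) * (Gamma ((Q-(k:ℝ))/2) * Gamma Q) :=
        mul_le_mul_of_nonneg_right hle (by positivity)
    _ ≤ (2:ℝ)^((k:ℝ)/2) * Gamma (Q/2) * Gamma (Q-(k:ℝ)/2) := hkey

end Paper
end
end

section
/- There exist universal constants α₁, α₂, ρ > 0 such that for every sufficiently large even integer n, every positive integer k ≤ α₁√n, and every measurable f : ℝᵏ → [0,∞) with ‖f‖_∞ ≤ e^{α₂√n}, C_{n,k} ∫_{ℝᵏ ∖ ρ n^{−1/4} B_k} f(x) (1−|x|²)₊^{(n−k−2)/2} dx ≤ (2α₁/ρ²) e^{−α₂√n}, where C_{n,k} = (n−k)·Vol(B_{n−k}) / (n·Vol(B_n)). -/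
open MeasureTheory Matrix

set_option synthInstance.maxHeartbeats 1000000
set_option maxHeartbeats 1000000

noncomputable section

namespace Paper

/-!
Write `m = n - k` and `w_p(x) = (1 - ‖x‖²)₊ ^ p`. Slicing the unit ball of `ℝ^(k+m)` by the
fibres over `ℝ^k` gives `Vol B_n = Vol B_m · ∫ w_{m/2}`, hence `C_{n,k} · ∫ w_{m/2} ≤ 1`, and
`∫ w_{m/2} ≥ (3/4)^{m/2} 2^{-k} Vol B_k` by looking at the ball of radius `1/2`. For `‖x‖ > r`,
either `1 - ‖x‖² ≤ 1/2` and `w_{m/2-1}(x) ≤ 2^{1-m/2}`, or `w_{m/2-1}(x) ≤ 2 w_{m/2}(x)` and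
`1 - ‖x‖² ≤ (1 - 3r²/4)(1 - ‖x‖²/4)`, so `w_{m/2-1}(x) ≤ 2 (1 - 3r²/4)^{m/2} w_{m/2}(x/2)`.
Integrating and rescaling `x ↦ x/2` bounds the left-hand side by
`‖f‖_∞ · 2^{k+1} ((2/3)^{m/2} + (1 - 3r²/4)^{m/2})`. With `r = 10 n^{-1/4}` and `k ≤ √n`,
`(1 - 3r²/4)^{m/2} ≤ exp(-37√n)` and `(2/3)^{m/2}` is smaller still, so `‖f‖_∞ ≤ e^{√n}` leaves
at most `(2/100) e^{-√n}` once `n ≥ 10^10`: the constants are `α₁ = α₂ = 1`, `ρ = 10`.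
-/

open Metric Module
open scoped ENNReal

lemma one_sub_rpow_sub_one_le {p r t : ℝ} (hp : 1 < p) (hr : 3 / 4 * r ^ 2 ≤ 1)
    (hrt : r ^ 2 ≤ t) (ht : t < 1) :
    (1 - t) ^ (p - 1) ≤ (1 / 2) ^ (p - 1) + 2 * (1 - 3 / 4 * r ^ 2) ^ p * (1 - t / 4) ^ p := by
  have hA : 0 ≤ 2 * (1 - 3 / 4 * r ^ 2) ^ p * (1 - t / 4) ^ p := by
    have : 0 ≤ 1 - t / 4 := by linarith
    positivity
  rcases le_or_gt (1 - t) (1 / 2) with hhalf | hhalf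
  · have := Real.rpow_le_rpow (by linarith) hhalf (by linarith : 0 ≤ p - 1)
    linarith
  · calc (1 - t) ^ (p - 1) = (1 - t) ^ p / (1 - t) := Real.rpow_sub_one (by linarith) p
      _ ≤ 2 * (1 - t) ^ p := by
          rw [div_le_iff₀ (by linarith)]
          nlinarith [Real.rpow_nonneg (by linarith : 0 ≤ 1 - t) p]
      _ ≤ 2 * ((1 - 3 / 4 * r ^ 2) * (1 - t / 4)) ^ p := by
          gcongr
          nlinarith [mul_nonneg (sq_nonneg r) ((sq_nonneg r).trans hrt)]
      _ = 2 * (1 - 3 / 4 * r ^ 2) ^ p * (1 - t / 4) ^ p := by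
          rw [Real.mul_rpow (by linarith) (by linarith), mul_assoc]
      _ ≤ _ := le_add_of_nonneg_left (by positivity)

section BallWeight

variable {E : Type*} [NormedAddCommGroup E]

def ballWeight (p : ℝ) (x : E) : ℝ≥0∞ := ENNReal.ofReal (max (1 - ‖x‖ ^ 2) 0 ^ p)

@[fun_prop]
lemma measurable_ballWeight [MeasurableSpace E] [OpensMeasurableSpace E] (p : ℝ) :
    Measurable (ballWeight p : E → ℝ≥0∞) := by
  unfold ballWeight; fun_prop

lemma ballWeight_eq_zero_of_one_le_norm {p : ℝ} (hp : 0 < p) {x : E} (hx : 1 ≤ ‖x‖) :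
    ballWeight p x = 0 := by
  rw [ballWeight, max_eq_right (by nlinarith), Real.zero_rpow hp.ne', ENNReal.ofReal_zero]

lemma ballWeight_sub_one_le [NormedSpace ℝ E] {p r : ℝ} (hp : 1 < p) (hr0 : 0 ≤ r)
    (hr : 3 / 4 * r ^ 2 ≤ 1) {x : E} (hx : r < ‖x‖) :
    ballWeight (p - 1) x ≤
      ENNReal.ofReal ((1 / 2) ^ (p - 1)) * (closedBall (0 : E) 1).indicator 1 x +
        ENNReal.ofReal (2 * (1 - 3 / 4 * r ^ 2) ^ p) * ballWeight p ((2 : ℝ)⁻¹ • x) := by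
  rcases le_or_gt 1 ‖x‖ with h1 | h1
  · rw [ballWeight_eq_zero_of_one_le_norm (by linarith) h1]
    exact zero_le
  have hA : 0 ≤ 2 * (1 - 3 / 4 * r ^ 2) ^ p :=
    mul_nonneg zero_le_two (Real.rpow_nonneg (by linarith) p)
  have hrt : r ^ 2 ≤ ‖x‖ ^ 2 := pow_le_pow_left₀ hr0 hx.le 2
  have ht : ‖x‖ ^ 2 < 1 := by nlinarith [norm_nonneg x]
  have hhalf : ‖(2 : ℝ)⁻¹ • x‖ ^ 2 = ‖x‖ ^ 2 / 4 := by
    rw [norm_smul]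
    norm_num
    ring
  rw [Set.indicator_of_mem (mem_closedBall_zero_iff.2 h1.le), Pi.one_apply, mul_one, ballWeight,
    ballWeight, hhalf, max_eq_left (by linarith), max_eq_left (by linarith),
    ← ENNReal.ofReal_mul hA, ← ENNReal.ofReal_add (by positivity)
      (mul_nonneg hA (Real.rpow_nonneg (by linarith) p))]
  exact ENNReal.ofReal_le_ofReal (by simpa [mul_assoc] using one_sub_rpow_sub_one_le hp hr hrt ht)

end BallWeight

lemma lintegral_comp_smul {E : Type*} [NormedAddCommGroup E] [NormedSpace ℝ E]
    [FiniteDimensional ℝ E] [MeasurableSpace E] [BorelSpace E]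
    (μ : Measure E) [μ.IsAddHaarMeasure] (f : E → ℝ≥0∞) {R : ℝ} (hR : R ≠ 0) :
    ∫⁻ x, f (R • x) ∂μ = ENNReal.ofReal |(R ^ finrank ℝ E)⁻¹| * ∫⁻ x, f x ∂μ := by
  calc ∫⁻ x, f (R • x) ∂μ = ∫⁻ x, f x ∂(μ.map (R • ·)) :=
        ((Homeomorph.smulOfNeZero R hR).measurableEmbedding.lintegral_map f).symm
    _ = _ := by rw [Measure.map_addHaar_smul μ hR, lintegral_smul_measure, smul_eq_mul]

section InnerProductSpace

variable {U V : Type*}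
  [NormedAddCommGroup U] [InnerProductSpace ℝ U] [FiniteDimensional ℝ U]
  [MeasurableSpace U] [BorelSpace U]
  [NormedAddCommGroup V] [InnerProductSpace ℝ V] [FiniteDimensional ℝ V]
  [MeasurableSpace V] [BorelSpace V]

lemma volume_setOf_norm_sq_le (hV : 0 < finrank ℝ V) (c : ℝ) :
    volume {v : V | ‖v‖ ^ 2 ≤ c} =
      ENNReal.ofReal (max c 0 ^ ((finrank ℝ V : ℝ) / 2)) * volume (closedBall (0 : V) 1) := by
  rcases le_or_gt 0 c with hc | hc
  · have hball : {v : V | ‖v‖ ^ 2 ≤ c} = closedBall 0 √c := by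
      ext v
      rw [Set.mem_ofPred_eq, mem_closedBall_zero_iff, Real.le_sqrt (norm_nonneg v) hc]
    rw [hball, Measure.addHaar_closedBall' _ _ (Real.sqrt_nonneg c), max_eq_left hc,
      Real.sqrt_eq_rpow, ← Real.rpow_natCast, ← Real.rpow_mul hc]
    ring_nf
  · have hempty : {v : V | ‖v‖ ^ 2 ≤ c} = ∅ :=
      Set.eq_empty_of_forall_notMem fun v hv => (hc.trans_le (sq_nonneg ‖v‖)).not_ge hv
    rw [hempty, max_eq_right hc.le, Real.zero_rpow (by positivity), ENNReal.ofReal_zero,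
      zero_mul, measure_empty]

lemma volume_closedBall_withLp_prod (hV : 0 < finrank ℝ V) :
    volume (closedBall (0 : WithLp 2 (U × V)) 1) =
      volume (closedBall (0 : V) 1) * ∫⁻ u : U, ballWeight ((finrank ℝ V : ℝ) / 2) u := by
  have hmeas : MeasurableSet (WithLp.toLp 2 ⁻¹' closedBall (0 : WithLp 2 (U × V)) 1) :=
    measurableSet_closedBall.preimage (WithLp.measurable_toLp 2 _)
  rw [← (WithLp.volume_preserving_toLp U V).measure_preimage
      measurableSet_closedBall.nullMeasurableSet, Measure.volume_eq_prod, Measure.prod_apply hmeas,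
    ← lintegral_const_mul _ (by fun_prop)]
  congr 1 with u
  have hslice : Prod.mk u ⁻¹' (WithLp.toLp 2 ⁻¹' closedBall (0 : WithLp 2 (U × V)) 1) =
      {v : V | ‖v‖ ^ 2 ≤ 1 - ‖u‖ ^ 2} := by
    ext v
    simp only [Set.mem_preimage, mem_closedBall_zero_iff, Set.mem_ofPred_eq]
    rw [← sq_le_one_iff₀ (norm_nonneg _), WithLp.prod_norm_sq_eq_of_L2, WithLp.toLp_fst,
      WithLp.toLp_snd, le_sub_iff_add_le']
  rw [hslice, volume_setOf_norm_sq_le hV, mul_comm, ballWeight]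

lemma lintegral_ballWeight_ge {p : ℝ} (hp : 0 ≤ p) :
    ENNReal.ofReal ((3 / 4) ^ p * (1 / 2) ^ finrank ℝ U) * volume (closedBall (0 : U) 1) ≤
      ∫⁻ u : U, ballWeight p u := by
  have hconst : ∀ u ∈ closedBall (0 : U) (1 / 2),
      ENNReal.ofReal ((3 / 4) ^ p) ≤ ballWeight p u := by
    intro u hu
    rw [mem_closedBall_zero_iff] at hu
    refine ENNReal.ofReal_le_ofReal (Real.rpow_le_rpow (by norm_num) ?_ hp)
    exact le_max_of_le_left (by nlinarith [norm_nonneg u])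
  calc ENNReal.ofReal ((3 / 4) ^ p * (1 / 2) ^ finrank ℝ U) * volume (closedBall (0 : U) 1)
      = ∫⁻ _ in closedBall (0 : U) (1 / 2), ENNReal.ofReal ((3 / 4) ^ p) := by
        rw [setLIntegral_const, Measure.addHaar_closedBall' _ _ (r := 1 / 2) (by norm_num),
          ENNReal.ofReal_mul (by positivity), mul_assoc]
    _ ≤ ∫⁻ u in closedBall (0 : U) (1 / 2), ballWeight p u :=
        setLIntegral_mono' measurableSet_closedBall hconst
    _ ≤ ∫⁻ u : U, ballWeight p u := setLIntegral_le_lintegral _ _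

lemma setLIntegral_compl_closedBall_ballWeight_le {p r : ℝ} (hp : 1 < p) (hr0 : 0 ≤ r)
    (hr : 3 / 4 * r ^ 2 ≤ 1) :
    ∫⁻ x in (closedBall (0 : U) r)ᶜ, ballWeight (p - 1) x ≤
      ENNReal.ofReal ((1 / 2) ^ (p - 1)) * volume (closedBall (0 : U) 1) +
        ENNReal.ofReal (2 * (1 - 3 / 4 * r ^ 2) ^ p) *
          (2 ^ finrank ℝ U * ∫⁻ x : U, ballWeight p x) := by
  calc ∫⁻ x in (closedBall (0 : U) r)ᶜ, ballWeight (p - 1) x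
      ≤ ∫⁻ x in (closedBall (0 : U) r)ᶜ,
          (ENNReal.ofReal ((1 / 2) ^ (p - 1)) * (closedBall (0 : U) 1).indicator 1 x +
            ENNReal.ofReal (2 * (1 - 3 / 4 * r ^ 2) ^ p) * ballWeight p ((2 : ℝ)⁻¹ • x)) :=
        setLIntegral_mono' measurableSet_closedBall.compl fun x hx =>
          ballWeight_sub_one_le hp hr0 hr (by simpa using hx)
    _ ≤ ∫⁻ x : U,
          (ENNReal.ofReal ((1 / 2) ^ (p - 1)) * (closedBall (0 : U) 1).indicator 1 x +
            ENNReal.ofReal (2 * (1 - 3 / 4 * r ^ 2) ^ p) * ballWeight p ((2 : ℝ)⁻¹ • x)) :=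
        setLIntegral_le_lintegral _ _
    _ = _ := by
        rw [lintegral_add_left ((measurable_one.indicator measurableSet_closedBall).const_mul _),
          lintegral_const_mul' _ _ ENNReal.ofReal_ne_top,
          lintegral_const_mul' _ _ ENNReal.ofReal_ne_top,
          lintegral_indicator_one measurableSet_closedBall,
          lintegral_comp_smul volume _ (by norm_num)]
        simp

end InnerProductSpace

lemma volume_closedBall_euclideanSpace_add (k m : ℕ) :
    volume (closedBall (0 : EuclideanSpace ℝ (Fin (k + m))) 1) =
      volume (closedBall
        (0 : WithLp 2 (EuclideanSpace ℝ (Fin k) × EuclideanSpace ℝ (Fin m))) 1) := by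
  let e := (LinearIsometryEquiv.piLpCongrLeft 2 ℝ ℝ finSumFinEquiv.symm).trans
    (PiLp.sumPiLpEquivProdLpPiLp (𝕜 := ℝ) 2 (fun _ : Fin k ⊕ Fin m => ℝ))
  rw [← e.measurePreserving.measure_preimage measurableSet_closedBall.nullMeasurableSet,
    e.preimage_closedBall, map_zero]

lemma ofReal_Cmk_mul_lintegral_ballWeight_le_one {n k : ℕ} (hkn : k < n) :
    ENNReal.ofReal (Cmk n k) *
      ∫⁻ x : EuclideanSpace ℝ (Fin k), ballWeight (((n - k : ℕ) : ℝ) / 2) x ≤ 1 := by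
  set J := ∫⁻ x : EuclideanSpace ℝ (Fin k), ballWeight (((n - k : ℕ) : ℝ) / 2) x
  set Vm := volume (closedBall (0 : EuclideanSpace ℝ (Fin (n - k))) 1)
  set Vn := volume (closedBall (0 : EuclideanSpace ℝ (Fin n)) 1)
  have hslice : Vn = Vm * J := by
    have h := volume_closedBall_euclideanSpace_add k (n - k)
    rw [volume_closedBall_withLp_prod (by rw [finrank_euclideanSpace_fin]; omega),
      finrank_euclideanSpace_fin, Nat.add_sub_cancel' hkn.le] at h
    exact h
  have hVm : Vm ≠ ⊤ := measure_closedBall_lt_top.ne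
  have hVn : Vn ≠ ⊤ := measure_closedBall_lt_top.ne
  have hVn_pos : 0 < Vn.toReal := ENNReal.toReal_pos (measure_closedBall_pos _ _ one_pos).ne' hVn
  have hC : ENNReal.ofReal (Cmk n k) ≤ Vm / Vn := by
    calc ENNReal.ofReal (Cmk n k) ≤ ENNReal.ofReal (Vm.toReal / Vn.toReal) := by
          refine ENNReal.ofReal_le_ofReal ?_
          rw [Cmk, mul_div_mul_comm]
          exact mul_le_of_le_one_left (by positivity)
            (div_le_one_of_le₀ (by exact_mod_cast Nat.sub_le n k) (by positivity))
      _ = Vm / Vn := by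
          rw [ENNReal.ofReal_div_of_pos hVn_pos, ENNReal.ofReal_toReal hVm,
            ENNReal.ofReal_toReal hVn]
  calc _ ≤ Vm / Vn * J := by gcongr
    _ = Vn / Vn := by rw [← ENNReal.mul_div_right_comm, hslice]
    _ ≤ 1 := ENNReal.div_self_le_one

lemma half_rpow_sub_one_mul_inv_eq (P : ℝ) (k : ℕ) :
    (1 / 2 : ℝ) ^ (P - 1) * ((3 / 4) ^ P * (1 / 2) ^ k)⁻¹ = 2 * (2 / 3) ^ P * 2 ^ k := by
  have h23 : (2 / 3 : ℝ) ^ P = (1 / 2) ^ P * ((3 / 4) ^ P)⁻¹ := by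
    rw [← Real.inv_rpow (by norm_num), ← Real.mul_rpow (by norm_num) (by norm_num)]
    norm_num
  rw [Real.rpow_sub_one (by norm_num), h23]
  field_simp
  rw [← mul_pow]
  norm_num

theorem ofReal_Cmk_mul_setLIntegral_le {n k : ℕ} (hkn : k + 2 < n) {r : ℝ} (hr0 : 0 ≤ r)
    (hr : 3 / 4 * r ^ 2 ≤ 1) {f : EuclideanSpace ℝ (Fin k) → ℝ≥0∞} {M : ℝ≥0∞}
    (hf : ∀ x, f x ≤ M) :
    ENNReal.ofReal (Cmk n k) *
        ∫⁻ x in (closedBall (0 : EuclideanSpace ℝ (Fin k)) r)ᶜ,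
          f x * ballWeight (((n - k : ℕ) : ℝ) / 2 - 1) x ≤
      M * ENNReal.ofReal (2 * (2 / 3) ^ (((n - k : ℕ) : ℝ) / 2) * 2 ^ k +
        2 * (1 - 3 / 4 * r ^ 2) ^ (((n - k : ℕ) : ℝ) / 2) * 2 ^ k) := by
  set P := ((n - k : ℕ) : ℝ) / 2
  have hP : 1 < P := by
    have : (3 : ℝ) ≤ ((n - k : ℕ) : ℝ) := by exact_mod_cast (by omega : 3 ≤ n - k)
    simp only [P]
    linarith
  set C := ENNReal.ofReal (Cmk n k)
  set J := ∫⁻ x : EuclideanSpace ℝ (Fin k), ballWeight P x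
  set V := volume (closedBall (0 : EuclideanSpace ℝ (Fin k)) 1)
  set u : ℝ := (3 / 4) ^ P * (1 / 2) ^ k
  set a : ℝ := (1 / 2) ^ (P - 1)
  set b : ℝ := 2 * (1 - 3 / 4 * r ^ 2) ^ P
  have hu : 0 < u := by positivity
  have hb : 0 ≤ b := mul_nonneg zero_le_two (Real.rpow_nonneg (by linarith) P)
  have hCJ : C * J ≤ 1 := ofReal_Cmk_mul_lintegral_ballWeight_le_one (by omega)
  have hCV : C * V ≤ ENNReal.ofReal u⁻¹ := by
    have hJ : ENNReal.ofReal u * V ≤ J := by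
      simpa only [finrank_euclideanSpace_fin] using
        lintegral_ballWeight_ge (U := EuclideanSpace ℝ (Fin k)) (p := P) (by positivity)
    rw [ENNReal.ofReal_inv_of_pos hu, ENNReal.le_inv_iff_mul_le]
    calc C * V * ENNReal.ofReal u = C * (ENNReal.ofReal u * V) := by ring
      _ ≤ C * J := by gcongr
      _ ≤ 1 := hCJ
  have hw : ∫⁻ x in (closedBall (0 : EuclideanSpace ℝ (Fin k)) r)ᶜ, ballWeight (P - 1) x ≤
      ENNReal.ofReal a * V + ENNReal.ofReal b * (2 ^ k * J) := by
    simpa only [finrank_euclideanSpace_fin] using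
      setLIntegral_compl_closedBall_ballWeight_le (U := EuclideanSpace ℝ (Fin k)) hP hr0 hr
  have hfw : ∫⁻ x in (closedBall (0 : EuclideanSpace ℝ (Fin k)) r)ᶜ, f x * ballWeight (P - 1) x ≤
      M * ∫⁻ x in (closedBall (0 : EuclideanSpace ℝ (Fin k)) r)ᶜ, ballWeight (P - 1) x :=
    (lintegral_mono fun x => mul_le_mul_left (hf x) _).trans_eq
      (lintegral_const_mul M (measurable_ballWeight _))
  calc C * ∫⁻ x in (closedBall (0 : EuclideanSpace ℝ (Fin k)) r)ᶜ, f x * ballWeight (P - 1) x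
      ≤ C * (M * (ENNReal.ofReal a * V + ENNReal.ofReal b * (2 ^ k * J))) := by
        gcongr
        exact hfw.trans (by gcongr)
    _ = M * (ENNReal.ofReal a * (C * V) + ENNReal.ofReal b * 2 ^ k * (C * J)) := by ring
    _ ≤ M * (ENNReal.ofReal a * ENNReal.ofReal u⁻¹ + ENNReal.ofReal b * 2 ^ k * 1) := by gcongr
    _ = _ := by
        rw [← ENNReal.ofReal_mul (by positivity), mul_one, half_rpow_sub_one_mul_inv_eq,
          ENNReal.ofReal_add (by positivity) (by positivity), ENNReal.ofReal_mul hb,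
          ENNReal.ofReal_pow zero_le_two, ENNReal.ofReal_ofNat]

section Exponential

open Real

lemma two_pow_le_exp (k : ℕ) : (2 : ℝ) ^ k ≤ exp k :=
  calc (2 : ℝ) ^ k ≤ exp 1 ^ k :=
        pow_le_pow_left₀ zero_le_two (by linarith [add_one_le_exp 1]) k
    _ = exp k := by rw [← exp_nat_mul, mul_one]

lemma two_hundred_mul_exp_le_exp {a b : ℝ} (h : a + 10 ≤ b) : 200 * exp a ≤ exp b :=
  calc 200 * exp a ≤ exp 10 * exp a := by
        gcongr
        have := two_pow_le_exp 10
        norm_num at this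
        linarith
    _ = exp (a + 10) := by rw [← exp_add, add_comm]
    _ ≤ exp b := exp_le_exp.2 h

lemma one_sub_rpow_mul_two_pow_le_exp {a P : ℝ} (ha : a ≤ 1) (hP : 0 ≤ P) (k : ℕ) :
    (1 - a) ^ P * 2 ^ k ≤ exp (-(a * P) + k) :=
  calc (1 - a) ^ P * 2 ^ k ≤ exp (-a) ^ P * exp k := by
        gcongr
        exacts [one_sub_le_exp_neg a, two_pow_le_exp k]
    _ = exp (-(a * P) + k) := by rw [← exp_mul, ← exp_add, neg_mul]

lemma exp_mul_error_terms_le {s r P : ℝ} {k : ℕ} (hs : 10 ^ 5 ≤ s) (hk : (k : ℝ) ≤ s)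
    (hP : 2 * P = s ^ 2 - k) (hr : r ^ 2 * s = 100) :
    exp s * (2 * (2 / 3) ^ P * 2 ^ k + 2 * (1 - 3 / 4 * r ^ 2) ^ P * 2 ^ k) ≤
      2 / 10 ^ 2 * exp (-s) := by
  have hP0 : 0 ≤ P := by nlinarith
  have hr1 : 3 / 4 * r ^ 2 ≤ 1 := by nlinarith [sq_nonneg r]
  have hrP : 3 / 4 * r ^ 2 * P * s = 75 * P := by linear_combination 3 / 4 * P * hr
  have e1 : (2 / 3) ^ P * 2 ^ k ≤ exp (-(1 / 3 * P) + k) := by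
    convert one_sub_rpow_mul_two_pow_le_exp (a := 1 / 3) (by norm_num) hP0 k using 3
    norm_num
  have e2 := one_sub_rpow_mul_two_pow_le_exp hr1 hP0 k
  have h1 : 200 * exp (s + (-(1 / 3 * P) + k)) ≤ exp (-s) :=
    two_hundred_mul_exp_le_exp (by nlinarith)
  have h2 : 200 * exp (s + (-(3 / 4 * r ^ 2 * P) + k)) ≤ exp (-s) :=
    two_hundred_mul_exp_le_exp (by nlinarith)
  calc exp s * (2 * (2 / 3) ^ P * 2 ^ k + 2 * (1 - 3 / 4 * r ^ 2) ^ P * 2 ^ k)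
      = 2 * (exp s * ((2 / 3) ^ P * 2 ^ k)) +
          2 * (exp s * ((1 - 3 / 4 * r ^ 2) ^ P * 2 ^ k)) := by ring
    _ ≤ 2 * (exp s * exp (-(1 / 3 * P) + k)) +
          2 * (exp s * exp (-(3 / 4 * r ^ 2 * P) + k)) := by gcongr
    _ = 2 * exp (s + (-(1 / 3 * P) + k)) + 2 * exp (s + (-(3 / 4 * r ^ 2 * P) + k)) := by
        rw [← exp_add, ← exp_add]
    _ ≤ 2 / 10 ^ 2 * exp (-s) := by linarith

lemma rpow_neg_quarter_sq_mul_sqrt {x : ℝ} (hx : 0 < x) : (x ^ (-(1 : ℝ) / 4)) ^ 2 * √x = 1 := by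
  rw [← rpow_natCast, ← rpow_mul hx.le, sqrt_eq_rpow, ← rpow_add hx]
  norm_num

end Exponential

/-- Proposition 3.11: the integral outside the ball of radius `ρ n^{-1/4}`
is negligible. -/
theorem large_deviation_integral_upper_bound :
    ∃ α₁ α₂ ρ : ℝ, 0 < α₁ ∧ 0 < α₂ ∧ 0 < ρ ∧ ∃ N : ℕ, ∀ n : ℕ, Even n → N ≤ n →
      ∀ k : ℕ, 0 < k → (k : ℝ) ≤ α₁ * Real.sqrt n →
      ∀ f : EuclideanSpace ℝ (Fin k) → ENNReal, Measurable f →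
      (∀ x, f x ≤ ENNReal.ofReal (Real.exp (α₂ * Real.sqrt n))) →
      ENNReal.ofReal (Cmk n k) *
          ∫⁻ x in (Metric.closedBall (0 : EuclideanSpace ℝ (Fin k))
              (ρ * (n : ℝ) ^ (-(1 : ℝ) / 4)))ᶜ,
            f x * ENNReal.ofReal ((max (1 - ‖x‖ ^ 2) 0) ^ (((n : ℝ) - (k : ℝ) - 2) / 2)) ≤
        ENNReal.ofReal ((2 * α₁ / ρ ^ 2) * Real.exp (-α₂ * Real.sqrt n)) := by
  refine ⟨1, 1, 10, one_pos, one_pos, by norm_num, 10 ^ 10, fun n _ hN k _ hk f _ hf => ?_⟩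
  have hn : (10 : ℝ) ^ 10 ≤ n := by exact_mod_cast hN
  have hs : (10 : ℝ) ^ 5 ≤ √n := Real.le_sqrt_of_sq_le (by linarith)
  have hsq : √n ^ 2 = n := Real.sq_sqrt (Nat.cast_nonneg n)
  rw [one_mul] at hk hf
  have hkn : k + 2 < n := by exact_mod_cast (show (k : ℝ) + 2 < n by nlinarith)
  have hr : (10 * (n : ℝ) ^ (-(1 : ℝ) / 4)) ^ 2 * √n = 100 := by
    rw [mul_pow, mul_assoc, rpow_neg_quarter_sq_mul_sqrt (by linarith)]
    norm_num
  have hexp : ((n : ℝ) - k - 2) / 2 = ((n - k : ℕ) : ℝ) / 2 - 1 := by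
    rw [Nat.cast_sub (by omega)]
    ring
  have hP : 2 * (((n - k : ℕ) : ℝ) / 2) = √n ^ 2 - k := by
    rw [Nat.cast_sub (by omega), hsq]
    ring
  rw [hexp]
  calc _ ≤ _ := ofReal_Cmk_mul_setLIntegral_le hkn (by positivity) (by nlinarith) hf
    _ = _ := (ENNReal.ofReal_mul (Real.exp_pos _).le).symm
    _ ≤ _ := ENNReal.ofReal_le_ofReal (by simpa using exp_mul_error_terms_le hs hk hP hr)

end Paper
end
end
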